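/- For every connected graph G and every vertex x ∈ V(G), γ_cg(G|x) ≤ 2γ_c(G|x) − 1 ≤ 2γ_c(G) − 1 ≤ 2γ_cg(G) − 1. -/

import Mathlib

open Finset

namespace ConnDomGame

variable {V : Type*} [Fintype V] [DecidableEq V]

/-- The closed neighborhood of a finite set of vertices. -/
def nbhd (G : SimpleGraph V) [DecidableRel G.Adj] (D : Finset V) : Finset V :=
  univ.filter fun u => u ∈ D ∨ ∃ v ∈ D, G.Adj u v

/-- The legal moves in the connected domination game on `G` with predominated set `S`,
from the position where the set of played vertices is `D`: a legal move must dominate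
a not-yet-dominated vertex and (except for the first move) be adjacent to a played vertex. -/
def legalMoves (G : SimpleGraph V) [DecidableRel G.Adj] (S D : Finset V) : Finset V :=
  univ.filter fun v =>
    ¬ (nbhd G {v} ⊆ S ∪ nbhd G D) ∧ (D = ∅ ∨ ∃ u ∈ D, G.Adj v u)

/-- Optimal number of further moves in the connected domination game on `G` with
predominated set `S`, from the position with played set `D`; `turn = true` means
Dominator (the minimizer) is to move.  The value is `⊤` if the player to move can
force the game to get stuck with an undominated vertex remaining.  The fuel
argument `n` is sufficient whenever `n + D.card ≥ Fintype.card V`. -/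
noncomputable def val (G : SimpleGraph V) [DecidableRel G.Adj] (S : Finset V) :
    Bool → ℕ → Finset V → ℕ∞
  | _, 0, D => if univ ⊆ S ∪ nbhd G D then 0 else ⊤
  | turn, n + 1, D =>
    if h : (legalMoves G S D).Nonempty then
      if turn then
        1 + (legalMoves G S D).inf' h fun v => val G S false n (insert v D)
      else
        1 + (legalMoves G S D).sup' h fun v => val G S true n (insert v D)
    else if univ ⊆ S ∪ nbhd G D then 0 else ⊤

/-- The Dominator-start game connected domination number of `G` with the vertices of `S`
predominated (`γ_cg(G|S)`; for `S = ∅` this is `γ_cg(G)`). -/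
noncomputable def gammaCG (G : SimpleGraph V) [DecidableRel G.Adj] (S : Finset V) : ℕ∞ :=
  val G S true (Fintype.card V) ∅

/-- The Staller-start game connected domination number of `G` with `S` predominated. -/
noncomputable def gammaCG' (G : SimpleGraph V) [DecidableRel G.Adj] (S : Finset V) : ℕ∞ :=
  val G S false (Fintype.card V) ∅

/-- The connected domination number of `G` with the set `S` predominated:
minimum size of a set `D` inducing a connected subgraph and dominating all
vertices outside `S`. -/
noncomputable def gammaC (G : SimpleGraph V) (S : Finset V) : ℕ :=
  sInf {k | ∃ D : Finset V, D.card = k ∧ (G.induce (D : Set V)).Connected ∧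
    ∀ u, u ∈ S ∨ u ∈ D ∨ ∃ v ∈ D, G.Adj u v}

/-- `l` is a legal sequence of first moves of the connected domination game on `G`
with predominated set `S`. -/
def LegalSeq (G : SimpleGraph V) [DecidableRel G.Adj] (S : Finset V) (l : List V) : Prop :=
  ∀ i (h : i < l.length), l.get ⟨i, h⟩ ∈ legalMoves G S (l.take i).toFinset

end ConnDomGame

namespace ConnDomGame

variable {V : Type*} [Fintype V] [DecidableEq V] (G : SimpleGraph V) [DecidableRel G.Adj]

lemma mem_nbhd {D : Finset V} {u : V} : u ∈ nbhd G D ↔ u ∈ D ∨ ∃ v ∈ D, G.Adj u v := by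
  simp [nbhd]

lemma mem_legalMoves {S D : Finset V} {v : V} :
    v ∈ legalMoves G S D ↔
      ¬ (nbhd G {v} ⊆ S ∪ nbhd G D) ∧ (D = ∅ ∨ ∃ u ∈ D, G.Adj v u) := by
  simp [legalMoves]

lemma subset_nbhd {D : Finset V} : D ⊆ nbhd G D := fun u hu => (mem_nbhd G).2 (Or.inl hu)

lemma nbhd_mono {D D' : Finset V} (h : D ⊆ D') : nbhd G D ⊆ nbhd G D' := by
  intro u hu
  rcases (mem_nbhd G).1 hu with h1 | ⟨v, hv, hadj⟩
  · exact (mem_nbhd G).2 (Or.inl (h h1))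
  · exact (mem_nbhd G).2 (Or.inr ⟨v, h hv, hadj⟩)

lemma nbhd_empty : nbhd G (∅ : Finset V) = ∅ := by
  ext u; simp [mem_nbhd]

lemma not_mem_of_legal {S D : Finset V} {v : V} (h : v ∈ legalMoves G S D) : v ∉ D := by
  intro hv
  exact ((mem_legalMoves G).1 h).1 fun y hy =>
    mem_union_right _ (nbhd_mono G (singleton_subset_iff.2 hv) hy)

lemma legalMoves_eq_empty_of_dominated {S D : Finset V}
    (h : univ ⊆ S ∪ nbhd G D) : legalMoves G S D = ∅ := by
  ext v
  simp only [notMem_empty, iff_false, mem_legalMoves, not_and, not_or]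
  intro hv
  exact absurd (fun y _ => h (mem_univ y)) hv

lemma val_zero {S D : Finset V} {turn : Bool} :
    val G S turn 0 D = if univ ⊆ S ∪ nbhd G D then 0 else ⊤ := by
  cases turn <;> rfl

lemma val_succ {S D : Finset V} {turn : Bool} {n : ℕ} :
    val G S turn (n+1) D =
    if h : (legalMoves G S D).Nonempty then
      if turn then
        1 + (legalMoves G S D).inf' h fun v => val G S false n (insert v D)
      else
        1 + (legalMoves G S D).sup' h fun v => val G S true n (insert v D)
    else if univ ⊆ S ∪ nbhd G D then 0 else ⊤ := by
  cases turn <;> rfl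

omit [Fintype V] [DecidableEq V] [DecidableRel G.Adj] in
lemma induce_singleton_connected (v : V) : (G.induce ({v} : Set V)).Connected := by
  rw [SimpleGraph.induce_singleton_eq_top]
  constructor
  intro a b
  have : a = b := Subsingleton.elim a b
  exact this ▸ SimpleGraph.Reachable.refl a

omit [Fintype V] [DecidableRel G.Adj] in
lemma induce_insert_connected {P : Finset V}
    (hP : (G.induce (P : Set V)).Connected) {v u : V} (hu : u ∈ P) (ha : G.Adj v u) :
    (G.induce ((insert v P : Finset V) : Set V)).Connected := by
  have h1 : (G.induce ({v, u} : Set V)).Connected := SimpleGraph.induce_pair_connected_of_adj ha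
  have h2 := SimpleGraph.induce_union_connected h1.preconnected hP.preconnected ⟨u, by simp, by simpa using hu⟩
  have : ({v, u} : Set V) ∪ (P : Set V) = ((insert v P : Finset V) : Set V) := by
    ext w
    simp only [Set.mem_union, Set.mem_insert_iff, Set.mem_singleton_iff,
      Finset.coe_insert, Finset.mem_coe, Finset.mem_insert]
    constructor
    · rintro ((rfl | rfl) | h) <;> simp_all
    · rintro (rfl | h) <;> simp_all
  rwa [this] at h2

lemma walk_aux {x : V} {D P : Finset V} (hx : x ∈ D → x ∈ P)
    {a b : ↥(D : Set V)} (w : (G.induce (D : Set V)).Walk a b)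
    (hbP : (b : V) ∈ P) (hy : ∃ y, y ∈ nbhd G {(a : V)} ∧ y ∉ ({x} : Finset V) ∪ nbhd G P) :
    ∃ z, z ∈ D ∧ z ∉ P ∧ z ∈ legalMoves G {x} P := by
  induction w with
  | nil =>
    obtain ⟨y, hy1, hy2⟩ := hy
    exact absurd (mem_union_right _
      (nbhd_mono G (singleton_subset_iff.2 hbP) hy1)) hy2
  | @cons a a' b h w ih =>
    obtain ⟨y, hy1, hy2⟩ := hy
    by_cases hca : (a : V) ∈ nbhd G P
    · have haP : (a : V) ∉ P := fun hmem =>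
        hy2 (mem_union_right _ (nbhd_mono G (singleton_subset_iff.2 hmem) hy1))
      refine ⟨a, by exact_mod_cast a.2, haP,
        (mem_legalMoves G).2 ⟨fun hsub => hy2 (hsub hy1), Or.inr ?_⟩⟩
      rcases (mem_nbhd G).1 hca with h1 | ⟨q, hq, hadj⟩
      · exact absurd h1 haP
      · exact ⟨q, hq, hadj⟩
    · have hadj : G.Adj (a : V) (a' : V) := h
      refine ih hbP ⟨(a : V), (mem_nbhd G).2 (Or.inr ⟨a', mem_singleton_self _, hadj⟩), ?_⟩
      rw [mem_union, not_or]
      refine ⟨?_, hca⟩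
      intro hax
      rw [mem_singleton] at hax
      subst hax
      exact hca (subset_nbhd G (hx (by exact_mod_cast a.2)))

lemma exists_legal {x : V} {D P : Finset V}
    (hconn : (G.induce (D : Set V)).Connected)
    (hdom : ∀ u, u ∈ ({x} : Finset V) ∨ u ∈ D ∨ ∃ v ∈ D, G.Adj u v)
    (hx : x ∈ D → x ∈ P) (hDP : (D ∩ P).Nonempty)
    (hnd : ¬ univ ⊆ ({x} : Finset V) ∪ nbhd G P) :
    ∃ z, z ∈ D ∧ z ∉ P ∧ z ∈ legalMoves G {x} P := by
  obtain ⟨u, -, hu⟩ := Finset.not_subset.1 hnd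
  obtain ⟨d, hd, hud⟩ : ∃ d, d ∈ D ∧ u ∈ nbhd G {d} := by
    rcases hdom u with h1 | h1 | ⟨v, hv, hadj⟩
    · exact absurd (mem_union_left _ h1) hu
    · exact ⟨u, h1, (mem_nbhd G).2 (Or.inl (mem_singleton_self _))⟩
    · exact ⟨v, hv, (mem_nbhd G).2 (Or.inr ⟨v, mem_singleton_self _, hadj⟩)⟩
  obtain ⟨p, hp⟩ := hDP
  rw [mem_inter] at hp
  obtain ⟨w⟩ := hconn.preconnected ⟨d, by exact_mod_cast hd⟩ ⟨p, by exact_mod_cast hp.1⟩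
  exact walk_aux G hx w hp.2 ⟨u, hud, hu⟩

lemma enat_step {a : ℕ∞} {k : ℕ} (hk : 1 ≤ k) (h : 1 + a ≤ (k : ℕ∞)) :
    a ≤ ((k - 1 : ℕ) : ℕ∞) := by
  have hrw : (k : ℕ∞) = ((k - 1 : ℕ) : ℕ∞) + 1 := by
    exact_mod_cast congrArg (Nat.cast : ℕ → ℕ∞) (by omega : k = k - 1 + 1)
  rw [hrw, add_comm 1 a] at h
  exact (ENat.add_le_add_iff_right (by simp)).mp h

lemma one_le_of_step {a : ℕ∞} {k : ℕ} (h : 1 + a ≤ (k : ℕ∞)) : 1 ≤ k := by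
  have h1 : (1 : ℕ∞) ≤ (k : ℕ∞) := le_trans le_self_add h
  exact_mod_cast h1

/-- Dominator's strategy bound: following a connected set `D` dominating `V \ {x}`. -/
lemma dominator_bound (x : V) {D : Finset V}
    (hconn : (G.induce (D : Set V)).Connected)
    (hdom : ∀ u, u ∈ ({x} : Finset V) ∨ u ∈ D ∨ ∃ v ∈ D, G.Adj u v) :
    ∀ n (P : Finset V), Fintype.card V ≤ n + P.card → (x ∈ D → x ∈ P) →
      (D ∩ P).Nonempty →
      val G {x} true n P ≤ ((2 * (D \ P).card - 1 : ℕ) : ℕ∞) ∧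
      val G {x} false n P ≤ ((2 * (D \ P).card : ℕ) : ℕ∞) := by
  intro n
  induction n with
  | zero =>
    intro P hcard _ _
    have hP : P = univ := Finset.eq_univ_of_card P (le_antisymm (card_le_univ P) (by simpa using hcard))
    have hover : univ ⊆ ({x} : Finset V) ∪ nbhd G P := fun u _ =>
      mem_union_right _ (subset_nbhd G (hP ▸ mem_univ u))
    constructor <;> · rw [val_zero, if_pos hover]; exact zero_le
  | succ n ih =>
    intro P hcard hx hDP
    by_cases hover : univ ⊆ ({x} : Finset V) ∪ nbhd G P
    · have hleg : legalMoves G ({x} : Finset V) P = ∅ := legalMoves_eq_empty_of_dominated G hover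
      constructor <;>
        · rw [val_succ, dif_neg (by simp [hleg]), if_pos hover]
          exact zero_le
    · obtain ⟨z, hzD, hzP, hzleg⟩ := exists_legal G hconn hdom hx hDP hover
      have hne : (legalMoves G ({x} : Finset V) P).Nonempty := ⟨z, hzleg⟩
      have hr : 1 ≤ (D \ P).card := card_pos.2 ⟨z, mem_sdiff.2 ⟨hzD, hzP⟩⟩
      constructor
      · rw [val_succ, dif_pos hne, if_pos rfl]
        have hstep := (ih (insert z P)
          (by rw [card_insert_of_notMem hzP]; omega)
          (fun hxD => mem_insert_of_mem (hx hxD))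
          ⟨z, mem_inter.2 ⟨hzD, mem_insert_self _ _⟩⟩).2
        have hcardz : (D \ insert z P).card = (D \ P).card - 1 := by
          rw [Finset.sdiff_insert, card_erase_of_mem (mem_sdiff.2 ⟨hzD, hzP⟩)]
        rw [hcardz] at hstep
        calc 1 + (legalMoves G {x} P).inf' hne (fun v => val G {x} false n (insert v P))
            ≤ 1 + val G {x} false n (insert z P) := by
              exact add_le_add_right (Finset.inf'_le _ hzleg) 1
          _ ≤ 1 + ((2 * ((D \ P).card - 1) : ℕ) : ℕ∞) := add_le_add_right hstep 1
          _ ≤ ((2 * (D \ P).card - 1 : ℕ) : ℕ∞) := by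
              rw [← Nat.cast_one, ← Nat.cast_add]
              exact Nat.cast_le.2 (by omega)
      · rw [val_succ, dif_pos hne, if_neg (by simp)]
        have hsup : ((legalMoves G {x} P).sup' hne fun v => val G {x} true n (insert v P)) ≤
            ((2 * (D \ P).card - 1 : ℕ) : ℕ∞) := by
          apply Finset.sup'_le
          intro v hv
          have hvP : v ∉ P := not_mem_of_legal G hv
          obtain ⟨p0, hp0⟩ := hDP
          rw [mem_inter] at hp0
          have := (ih (insert v P)
            (by rw [card_insert_of_notMem hvP]; omega)
            (fun hxD => mem_insert_of_mem (hx hxD))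
            ⟨p0, mem_inter.2 ⟨hp0.1, mem_insert_of_mem hp0.2⟩⟩).1
          refine le_trans this (Nat.cast_le.2 ?_)
          have hsub : (D \ insert v P).card ≤ (D \ P).card :=
            card_le_card (sdiff_subset_sdiff subset_rfl (subset_insert _ _))
          omega
        calc 1 + ((legalMoves G {x} P).sup' hne fun v => val G {x} true n (insert v P))
            ≤ 1 + ((2 * (D \ P).card - 1 : ℕ) : ℕ∞) := add_le_add_right hsup 1
          _ ≤ ((2 * (D \ P).card : ℕ) : ℕ∞) := by
              rw [← Nat.cast_one, ← Nat.cast_add]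
              exact Nat.cast_le.2 (by omega)

end ConnDomGame

namespace ConnDomGame
variable {V : Type*} [Fintype V] [DecidableEq V] (G : SimpleGraph V) [DecidableRel G.Adj]

/-- From a finite game value one can reconstruct a connected dominating set. -/
lemma reconstruct (hG : G.Connected) :
    ∀ n (P : Finset V) (turn : Bool) (k : ℕ),
      (P = ∅ ∨ (G.induce (P : Set V)).Connected) →
      val G ∅ turn n P ≤ (k : ℕ∞) →
      ∃ D' : Finset V, P ⊆ D' ∧ D'.card ≤ P.card + k ∧ (G.induce (D' : Set V)).Connected ∧
        ∀ u, u ∈ D' ∨ ∃ v ∈ D', G.Adj u v := by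
  have hfin : ∀ (P : Finset V) (k : ℕ),
      (P = ∅ ∨ (G.induce (P : Set V)).Connected) →
      (univ ⊆ ∅ ∪ nbhd G P) →
      ∃ D' : Finset V, P ⊆ D' ∧ D'.card ≤ P.card + k ∧ (G.induce (D' : Set V)).Connected ∧
        ∀ u, u ∈ D' ∨ ∃ v ∈ D', G.Adj u v := by
    intro P k hP hd
    rcases hP with rfl | hPc
    · exfalso
      obtain ⟨v⟩ := hG.nonempty
      have := hd (mem_univ v)
      simp [nbhd_empty] at this
    · refine ⟨P, subset_rfl, Nat.le_add_right _ _, hPc, fun u => ?_⟩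
      have := hd (mem_univ u)
      rw [empty_union] at this
      exact (mem_nbhd G).1 this
  intro n
  induction n with
  | zero =>
    intro P turn k hP h
    rw [val_zero] at h
    by_cases hd : univ ⊆ ∅ ∪ nbhd G P
    · exact hfin P k hP hd
    · rw [if_neg hd] at h
      exact absurd h (by simp)
  | succ n ih =>
    intro P turn k hP h
    rw [val_succ] at h
    by_cases hne : (legalMoves G ∅ P).Nonempty
    · rw [dif_pos hne] at h
      have key : ∃ v ∈ legalMoves G ∅ P,
          val G ∅ (!turn) n (insert v P) ≤ ((k - 1 : ℕ) : ℕ∞) ∧ 1 ≤ k := by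
        cases turn with
        | true =>
          rw [if_pos rfl] at h
          have hk : 1 ≤ k := one_le_of_step h
          obtain ⟨v, hv, hveq⟩ := Finset.exists_mem_eq_inf' hne
            fun v => val G ∅ false n (insert v P)
          exact ⟨v, hv, by rw [show (!true) = false from rfl, ← hveq]; exact enat_step hk h, hk⟩
        | false =>
          rw [if_neg (by simp)] at h
          have hk : 1 ≤ k := one_le_of_step h
          obtain ⟨v, hv⟩ := id hne
          refine ⟨v, hv, ?_, hk⟩
          have hle : val G ∅ true n (insert v P) ≤
              (legalMoves G ∅ P).sup' hne fun v => val G ∅ true n (insert v P) :=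
            Finset.le_sup' (fun v => val G ∅ true n (insert v P)) hv
          exact le_trans hle (enat_step hk h)
      obtain ⟨v, hv, hval, hk⟩ := key
      have hvP : v ∉ P := not_mem_of_legal G hv
      have hP' : (G.induce ((insert v P : Finset V) : Set V)).Connected := by
        rcases hP with rfl | hPc
        · rw [insert_empty_eq]
          rw [show ((({v} : Finset V) : Set V)) = ({v} : Set V) from coe_singleton v]
          exact induce_singleton_connected G v
        · rcases ((mem_legalMoves G).1 hv).2 with rfl | ⟨u, hu, hadj⟩
          · rw [show ((∅ : Finset V) = ∅) from rfl] at hPc ⊢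
            rw [insert_empty_eq]
            rw [show ((({v} : Finset V) : Set V)) = ({v} : Set V) from coe_singleton v]
            exact induce_singleton_connected G v
          · exact induce_insert_connected G hPc hu hadj
      obtain ⟨D', hsub, hcardD, hconnD, hdomD⟩ :=
        ih (insert v P) (!turn) (k - 1) (Or.inr hP') hval
      refine ⟨D', (subset_insert _ _).trans hsub, ?_, hconnD, hdomD⟩
      rw [card_insert_of_notMem hvP] at hcardD
      omega
    · rw [dif_neg hne] at h
      by_cases hd : univ ⊆ ∅ ∪ nbhd G P
      · exact hfin P k hP hd
      · rw [if_neg hd] at h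
        exact absurd h (by simp)
end ConnDomGame

namespace ConnDomGame
variable {V : Type*} [Fintype V] [DecidableEq V] (G : SimpleGraph V) [DecidableRel G.Adj]

lemma univ_mem_set (hG : G.Connected) (S : Finset V) :
    Fintype.card V ∈ {k | ∃ D : Finset V, D.card = k ∧ (G.induce (D : Set V)).Connected ∧
      ∀ u, u ∈ S ∨ u ∈ D ∨ ∃ v ∈ D, G.Adj u v} := by
  refine ⟨univ, card_univ, ?_, fun u => Or.inr (Or.inl (mem_univ u))⟩
  rw [coe_univ]
  exact SimpleGraph.Connected.map (G.induceUnivIso).symm.toHom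
    (G.induceUnivIso).symm.toEquiv.surjective hG

lemma gammaC_spec (hG : G.Connected) (S : Finset V) :
    ∃ D : Finset V, D.card = gammaC G S ∧ (G.induce (D : Set V)).Connected ∧
      ∀ u, u ∈ S ∨ u ∈ D ∨ ∃ v ∈ D, G.Adj u v :=
  Nat.sInf_mem ⟨_, univ_mem_set G hG S⟩

lemma gammaC_le (S : Finset V) {D : Finset V} (hconn : (G.induce (D : Set V)).Connected)
    (hdom : ∀ u, u ∈ S ∨ u ∈ D ∨ ∃ v ∈ D, G.Adj u v) : gammaC G S ≤ D.card :=
  Nat.sInf_le ⟨D, rfl, hconn, hdom⟩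

lemma card_pos_of_connected {D : Finset V} (hconn : (G.induce (D : Set V)).Connected) :
    1 ≤ D.card := by
  obtain ⟨⟨d, hd⟩⟩ := hconn.nonempty
  exact card_pos.2 ⟨d, by exact_mod_cast hd⟩

lemma part1 (hG : G.Connected) (x : V) :
    gammaCG G {x} ≤ ((2 * gammaC G {x} - 1 : ℕ) : ℕ∞) := by
  obtain ⟨D, hDcard, hconn, hdom⟩ := gammaC_spec G hG {x}
  have hγpos : 1 ≤ gammaC G {x} := hDcard ▸ card_pos_of_connected G hconn
  have hVpos : 0 < Fintype.card V := @Fintype.card_pos V _ hG.nonempty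
  obtain ⟨m, hm⟩ : ∃ m, Fintype.card V = m + 1 := ⟨Fintype.card V - 1, by omega⟩
  unfold gammaCG
  rw [hm, val_succ]
  by_cases hover : univ ⊆ ({x} : Finset V) ∪ nbhd G (∅ : Finset V)
  · rw [dif_neg (by simp [legalMoves_eq_empty_of_dominated G hover]), if_pos hover]
    exact zero_le
  · obtain ⟨⟨d0, hd0'⟩⟩ := hconn.nonempty
    have hd0 : d0 ∈ D := by exact_mod_cast hd0'
    set w0 : V := if x ∈ D then x else d0 with hw0
    have hw0D : w0 ∈ D := by
      by_cases h : x ∈ D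
      · rw [hw0, if_pos h]; exact h
      · rw [hw0, if_neg h]; exact hd0
    have hw0leg : w0 ∈ legalMoves G {x} ∅ := by
      refine (mem_legalMoves G).2 ⟨?_, Or.inl rfl⟩
      intro hsub
      rw [nbhd_empty] at hsub
      by_cases hxD : x ∈ D
      · obtain ⟨u, -, hu⟩ := Finset.not_subset.1 hover
        have hux : u ≠ x := by
          intro h; subst h
          exact hu (mem_union_left _ (mem_singleton_self u))
        obtain ⟨p⟩ := hG.preconnected x u
        have hxadj : ∃ y, G.Adj x y := by
          cases p with
          | nil => exact absurd rfl hux.symm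
          | cons h _ => exact ⟨_, h⟩
        obtain ⟨y, hy⟩ := hxadj
        have hyx : y ≠ x := fun h => G.irrefl (h ▸ hy)
        have : y ∈ nbhd G {w0} := by
          rw [hw0, if_pos hxD]
          exact (mem_nbhd G).2 (Or.inr ⟨x, mem_singleton_self x, hy.symm⟩)
        have := hsub this
        rw [union_empty, mem_singleton] at this
        exact hyx this
      · have hw0d : w0 = d0 := by rw [hw0, if_neg hxD]
        have : w0 ∈ nbhd G {w0} := subset_nbhd G (mem_singleton_self w0)
        have := hsub this
        rw [union_empty, mem_singleton] at this
        exact hxD (this ▸ hw0D)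
    have hne : (legalMoves G ({x} : Finset V) (∅ : Finset V)).Nonempty := ⟨w0, hw0leg⟩
    rw [dif_pos hne, if_pos rfl]
    have hbound := (dominator_bound G x hconn hdom m {w0}
      (by rw [card_singleton]; omega)
      (fun hxD => by rw [hw0, if_pos hxD]; exact mem_singleton_self x)
      ⟨w0, mem_inter.2 ⟨hw0D, mem_singleton_self w0⟩⟩).2
    have hcardD : (D \ {w0}).card = gammaC G {x} - 1 := by
      rw [card_sdiff_of_subset (singleton_subset_iff.2 hw0D), card_singleton, hDcard]
    rw [hcardD] at hbound
    calc 1 + (legalMoves G {x} ∅).inf' hne (fun v => val G {x} false m (insert v ∅))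
        ≤ 1 + val G {x} false m (insert w0 ∅) := add_le_add_right (Finset.inf'_le _ hw0leg) 1
      _ ≤ 1 + ((2 * (gammaC G {x} - 1) : ℕ) : ℕ∞) := by
          exact add_le_add_right (by simpa using hbound) 1
      _ ≤ ((2 * gammaC G {x} - 1 : ℕ) : ℕ∞) := by
          rw [← Nat.cast_one, ← Nat.cast_add]
          exact Nat.cast_le.2 (by omega)

lemma part2 (hG : G.Connected) (x : V) : gammaC G {x} ≤ gammaC G ∅ := by
  obtain ⟨D, hDcard, hconn, hdom⟩ := gammaC_spec G hG ∅
  have := gammaC_le G {x} hconn fun u => Or.inr ((hdom u).resolve_left (notMem_empty u))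
  omega

lemma part3 (hG : G.Connected) :
    ((2 * gammaC G ∅ - 1 : ℕ) : ℕ∞) ≤ 2 * gammaCG G ∅ - 1 := by
  rcases eq_or_ne (gammaCG G ∅) ⊤ with htop | hfin
  · rw [htop]
    have : (2 : ℕ∞) * ⊤ - 1 = ⊤ := by simp
    rw [this]
    exact le_top
  · obtain ⟨k, hk⟩ := WithTop.ne_top_iff_exists.1 hfin
    obtain ⟨D', -, hcardD, hconnD, hdomD⟩ := reconstruct G hG (Fintype.card V) ∅ true k
      (Or.inl rfl) (le_of_eq hk.symm)
    have hγ : gammaC G ∅ ≤ k :=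
      le_trans (gammaC_le G ∅ hconnD fun u => Or.inr (hdomD u)) (by simpa using hcardD)
    rw [← hk]
    calc ((2 * gammaC G ∅ - 1 : ℕ) : ℕ∞) ≤ ((2 * k - 1 : ℕ) : ℕ∞) := Nat.cast_le.2 (by omega)
      _ = 2 * (k : ℕ∞) - 1 := by
          rw [ENat.coe_sub, Nat.cast_mul, Nat.cast_one, Nat.cast_ofNat]

end ConnDomGame


open ConnDomGame in
/-- For every connected graph `G` and every `x ∈ V(G)`,
`γ_cg(G|x) ≤ 2γ_c(G|x) − 1 ≤ 2γ_c(G) − 1 ≤ 2γ_cg(G) − 1`. -/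
theorem gammaCG_predominated_weak_chain {V : Type*} [Fintype V] [DecidableEq V]
    (G : SimpleGraph V) [DecidableRel G.Adj] (hG : G.Connected) (x : V) :
    gammaCG G {x} ≤ ((2 * gammaC G {x} - 1 : ℕ) : ℕ∞) ∧
      ((2 * gammaC G {x} - 1 : ℕ) : ℕ∞) ≤ ((2 * gammaC G ∅ - 1 : ℕ) : ℕ∞) ∧
      ((2 * gammaC G ∅ - 1 : ℕ) : ℕ∞) ≤ 2 * gammaCG G ∅ - 1 := by
  refine ⟨part1 G hG x, ?_, part3 G hG⟩
  have := part2 G hG x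
  exact Nat.cast_le.2 (by omega)
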